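/- arXiv:2104.06423 — 2 statements merged into one kernel-verified Lean document; each statement's English description precedes it below -/
import Mathlib

section
/- For random matrices with i.i.d. standard complex Gaussian entries, the 2t-th moment of the permanent of a k×k matrix equals the 2k-th moment of the permanent of a t×t matrix: E_{M ~ G^{k×k}} |Perm(M)|^{2t} = E_{M ~ G^{t×t}} |Perm(M)|^{2k}. -/
open MeasureTheory ProbabilityTheory

/-- `M` is a random `k × k` matrix whose entries are i.i.d. standard complex Gaussian
random variables, characterized by independence of the entries together with the
mixed moments `E[x^a * conj x ^ b] = a! * δ_{a b}` of a standard complex Gaussian. -/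
def IsIIDStdComplexGaussianMatrix {Ω : Type*} [MeasurableSpace Ω] (P : Measure Ω)
    {k : ℕ} (M : Ω → Matrix (Fin k) (Fin k) ℂ) : Prop :=
  (∀ i j, Measurable fun ω => M ω i j) ∧
  iIndepFun (fun p : Fin k × Fin k => fun ω => M ω p.1 p.2) P ∧
  (∀ i j (a b : ℕ), Integrable
      (fun ω => (M ω i j) ^ a * (starRingEnd ℂ) (M ω i j) ^ b) P) ∧
  (∀ i j (a b : ℕ),
    ∫ ω, (M ω i j) ^ a * (starRingEnd ℂ) (M ω i j) ^ b ∂P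
      = if a = b then (a.factorial : ℂ) else 0)

/-!
Write `|perm M|^(2t) = perm(M)^t · conj(perm M)^t` and expand both powers over `t`-tuples `σ, τ`
of permutations of `Fin k`: the `(σ, τ)` term is a monomial in the entries and their conjugates.
By independence and `E[z^a z̄^b] = a! δ_{ab}`, its expectation is the number of ways to match, for
each column `i`, the factors `M (σ s i) i` of the `σ`-monomial bijectively with equal factors of the
`τ`-monomial, i.e. the number of `ρ : Fin k → Perm (Fin t)` with `τ (ρ i s) i = σ s i`. Hence the
moment counts the triples `(σ, τ, ρ)` satisfying this relation, and `(σ, τ, ρ) ↦ (ρ, τ', σ)` with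
`τ' j s = ρ ((σ s)⁻¹ j) s` is a bijection onto the triples with the roles of `k` and `t` exchanged.
-/

open Finset Equiv
open scoped Nat

theorem ProbabilityTheory.iIndepFun.integrable_finsetProd {Ω 𝕜 ι : Type*} [RCLike 𝕜]
    {mΩ : MeasurableSpace Ω} {μ : Measure Ω} {X : ι → Ω → 𝕜} (hX : iIndepFun X μ)
    (hXm : ∀ i, Measurable (X i)) (hXi : ∀ i, Integrable (X i) μ) (s : Finset ι) :
    Integrable (∏ i ∈ s, X i) μ := by
  classical
  have := hX.isProbabilityMeasure
  induction s using Finset.induction_on with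
  | empty =>
    rw [prod_empty]
    exact integrable_const 1
  | insert j s hj ih =>
    rw [prod_insert hj]
    exact (hX.indepFun_finsetProd_of_notMem hXm hj).symm.integrable_mul (hXi j) ih

theorem Fintype.card_equiv_eq_ite (α β : Type*) [Fintype α] [DecidableEq α] [Fintype β]
    [DecidableEq β] :
    Fintype.card (α ≃ β) = if card α = card β then (card α)! else 0 := by
  split_ifs with h
  · exact card_equiv (equivOfCardEq h)
  · exact card_eq_zero_iff.mpr ⟨fun e => h (card_congr e)⟩

section Intertwining

variable {α β : Type*}

def Equiv.Perm.intertwiningEquiv (f g : α → β) :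
    {π : Perm α // ∀ a, g (π a) = f a} ≃ ∀ b, {a // f a = b} ≃ {a // g a = b} where
  toFun π b := π.1.subtypeEquiv fun a => by rw [← π.2 a]
  invFun e := ⟨ofFiberEquiv e, ofFiberEquiv_map e⟩
  left_inv _ := rfl
  right_inv e := by
    funext b
    ext ⟨a, rfl⟩
    rfl

variable [Fintype α] [DecidableEq α] [Fintype β] [DecidableEq β]

theorem Equiv.Perm.card_intertwining (f g : α → β) :
    Fintype.card {π : Perm α // ∀ a, g (π a) = f a}
      = ∏ b, if #{a | f a = b} = #{a | g a = b} then (#{a | f a = b})! else 0 := by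
  rw [Fintype.card_congr (intertwiningEquiv f g), Fintype.card_pi]
  refine prod_congr rfl fun b _ => ?_
  rw [Fintype.card_equiv_eq_ite, Fintype.card_subtype, Fintype.card_subtype]

end Intertwining

section PermutationTuples

variable {n ι : Type*} [Fintype n] [DecidableEq n] [Fintype ι]

def entryCount (σ : ι → Perm n) (p : n × n) : ℕ := #{s | σ s p.2 = p.1}

theorem prod_prod_apply_perm_eq_prod_pow_entryCount {M : Type*} [CommMonoid M]
    (σ : ι → Perm n) (f : n × n → M) :
    ∏ s, ∏ i, f (σ s i, i) = ∏ p, f p ^ entryCount σ p := by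
  rw [prod_comm, Fintype.prod_prod_type_right]
  refine prod_congr rfl fun i _ => ?_
  rw [← prod_fiberwise' univ (fun s => σ s i) (fun j => f (j, i))]
  simp only [prod_const, entryCount]

theorem Matrix.permanent_pow {R : Type*} [CommSemiring R] (A : Matrix n n R) (t : ℕ) :
    A.permanent ^ t = ∑ σ : Fin t → Perm n, ∏ p : n × n, A p.1 p.2 ^ entryCount σ p := by
  simp only [Matrix.permanent, Fintype.sum_pow,
    prod_prod_apply_perm_eq_prod_pow_entryCount _ fun p => A p.1 p.2]

theorem Matrix.ofReal_norm_permanent_pow_two_mul (A : Matrix n n ℂ) (t : ℕ) :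
    ((‖A.permanent‖ ^ (2 * t) : ℝ) : ℂ) = ∑ σ : Fin t → Perm n, ∑ τ : Fin t → Perm n,
      ∏ p : n × n, A p.1 p.2 ^ entryCount σ p * (starRingEnd ℂ) (A p.1 p.2) ^ entryCount τ p := by
  rw [pow_mul, Complex.ofReal_pow, Complex.ofReal_pow, ← Complex.mul_conj', mul_pow, ← map_pow,
    Matrix.permanent_pow, map_sum, sum_mul_sum]
  simp only [map_prod, map_pow, prod_mul_distrib]

end PermutationTuples

abbrev PermTriple (n ι : Type*) : Type _ :=
  {x : (ι → Perm n) × (ι → Perm n) × (n → Perm ι) // ∀ i s, x.2.1 (x.2.2 i s) i = x.1 s i}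

namespace PermTriple

variable {n ι : Type*}

def transpose : PermTriple n ι → PermTriple ι n
  | ⟨(σ, τ, ρ), h⟩ =>
    ⟨(ρ, fun j =>
      { toFun s := ρ ((σ s).symm j) s
        invFun u := (ρ ((τ u).symm j)).symm u
        left_inv s := by
          have : (τ (ρ ((σ s).symm j) s)).symm j = (σ s).symm j := by
            rw [symm_apply_eq, h, apply_symm_apply]
          simp only [this, symm_apply_apply]
        right_inv u := by
          have : (σ ((ρ ((τ u).symm j)).symm u)).symm j = (τ u).symm j := by
            rw [symm_apply_eq, ← h, apply_symm_apply, apply_symm_apply]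
          simp only [this, apply_symm_apply] }, σ),
      fun i s => by simp⟩

theorem transpose_transpose (x : PermTriple n ι) : x.transpose.transpose = x := by
  obtain ⟨⟨σ, τ, ρ⟩, h⟩ := x
  ext u i
  · rfl
  · simpa [transpose] using (h i ((ρ i).symm u)).symm
  · rfl

def transposeEquiv : PermTriple n ι ≃ PermTriple ι n where
  toFun := transpose
  invFun := transpose
  left_inv := transpose_transpose
  right_inv := transpose_transpose

variable [Fintype n] [DecidableEq n] [Fintype ι] [DecidableEq ι]

theorem prod_ite_entryCount_eq_card (σ τ : ι → Perm n) :
    ∏ p, (if entryCount σ p = entryCount τ p then (entryCount σ p)! else 0)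
      = Fintype.card {ρ : n → Perm ι // ∀ i s, τ (ρ i s) i = σ s i} := by
  rw [Fintype.card_congr
      (subtypePiEquivPi (p := fun (i : n) (π : Perm ι) => ∀ s, τ (π s) i = σ s i)),
    Fintype.card_pi, Fintype.prod_prod_type_right]
  exact prod_congr rfl fun i _ => (Perm.card_intertwining (σ · i) (τ · i)).symm

theorem card_eq_sum_prod_entryCount :
    Nat.card (PermTriple n ι) = ∑ σ : ι → Perm n, ∑ τ : ι → Perm n,
      ∏ p, if entryCount σ p = entryCount τ p then (entryCount σ p)! else 0 := by
  simp only [Nat.card_eq_fintype_card, prod_ite_entryCount_eq_card, Fintype.card_subtype,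
    card_filter, Fintype.sum_prod_type]

end PermTriple

namespace IsIIDStdComplexGaussianMatrix

variable {Ω : Type*} [MeasurableSpace Ω] {P : Measure Ω} {k : ℕ}
  {M : Ω → Matrix (Fin k) (Fin k) ℂ}

theorem integrable_prod_pow_mul_conj_pow (hM : IsIIDStdComplexGaussianMatrix P M)
    (a b : Fin k × Fin k → ℕ) :
    Integrable (fun ω => ∏ p, M ω p.1 p.2 ^ a p * (starRingEnd ℂ) (M ω p.1 p.2) ^ b p) P := by
  obtain ⟨hmeas, hind, hint, -⟩ := hM
  have hmono : ∀ p : Fin k × Fin k, Measurable fun z : ℂ => z ^ a p * (starRingEnd ℂ) z ^ b p :=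
    fun p => by fun_prop
  simpa only [prod_fn, Function.comp_apply] using
    (hind.comp _ hmono).integrable_finsetProd (fun p => (hmono p).comp (hmeas p.1 p.2))
      (fun p => hint p.1 p.2 (a p) (b p)) univ

theorem integral_prod_pow_mul_conj_pow (hM : IsIIDStdComplexGaussianMatrix P M)
    (a b : Fin k × Fin k → ℕ) :
    ∫ ω, ∏ p, M ω p.1 p.2 ^ a p * (starRingEnd ℂ) (M ω p.1 p.2) ^ b p ∂P
      = ∏ p, if a p = b p then ((a p)! : ℂ) else 0 := by
  obtain ⟨hmeas, hind, -, hmom⟩ := hM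
  rw [hind.integral_fun_prod_comp (f := fun p z => z ^ a p * (starRingEnd ℂ) z ^ b p)
    (fun p => (hmeas p.1 p.2).aemeasurable)
    (fun p => (by fun_prop : Continuous _).aestronglyMeasurable)]
  exact prod_congr rfl fun p _ => hmom p.1 p.2 (a p) (b p)

theorem integral_norm_permanent_pow (hM : IsIIDStdComplexGaussianMatrix P M) (t : ℕ) :
    ∫ ω, ‖(M ω).permanent‖ ^ (2 * t) ∂P = Nat.card (PermTriple (Fin k) (Fin t)) := by
  have hint (σ τ : Fin t → Perm (Fin k)) :
      Integrable (fun ω => ∏ p, M ω p.1 p.2 ^ entryCount σ p *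
        (starRingEnd ℂ) (M ω p.1 p.2) ^ entryCount τ p) P :=
    hM.integrable_prod_pow_mul_conj_pow _ _
  apply Complex.ofReal_injective
  calc ((∫ ω, ‖(M ω).permanent‖ ^ (2 * t) ∂P : ℝ) : ℂ)
      = ∫ ω, ∑ σ : Fin t → Perm (Fin k), ∑ τ : Fin t → Perm (Fin k), ∏ p,
          M ω p.1 p.2 ^ entryCount σ p * (starRingEnd ℂ) (M ω p.1 p.2) ^ entryCount τ p ∂P := by
        simp only [← integral_complex_ofReal, Matrix.ofReal_norm_permanent_pow_two_mul]
    _ = ∑ σ : Fin t → Perm (Fin k), ∑ τ : Fin t → Perm (Fin k),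
          ∏ p, if entryCount σ p = entryCount τ p then ((entryCount σ p)! : ℂ) else 0 := by
        rw [integral_finsetSum _ fun σ _ => integrable_finsetSum _ fun τ _ => hint σ τ]
        refine sum_congr rfl fun σ _ => ?_
        rw [integral_finsetSum _ fun τ _ => hint σ τ]
        exact sum_congr rfl fun τ _ => hM.integral_prod_pow_mul_conj_pow _ _
    _ = Nat.card (PermTriple (Fin k) (Fin t)) := by
        rw [PermTriple.card_eq_sum_prod_entryCount]
        push_cast
        rfl

end IsIIDStdComplexGaussianMatrix

theorem gaussian_permanent_moment_size_duality_general
    {Ω₁ : Type*} [MeasurableSpace Ω₁] (P₁ : Measure Ω₁)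
    {Ω₂ : Type*} [MeasurableSpace Ω₂] (P₂ : Measure Ω₂)
    (k t : ℕ)
    (M : Ω₁ → Matrix (Fin k) (Fin k) ℂ) (hM : IsIIDStdComplexGaussianMatrix P₁ M)
    (N : Ω₂ → Matrix (Fin t) (Fin t) ℂ) (hN : IsIIDStdComplexGaussianMatrix P₂ N) :
    ∫ ω, ‖(M ω).permanent‖ ^ (2*t) ∂P₁
      = ∫ ω, ‖(N ω).permanent‖ ^ (2*k) ∂P₂ := by
  rw [hM.integral_norm_permanent_pow, hN.integral_norm_permanent_pow,
    Nat.card_congr PermTriple.transposeEquiv]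

/-- Moment-size duality: the `2t`-th moment of the permanent of a random `k × k`
complex Gaussian matrix equals the `2k`-th moment of the permanent of a random `t × t`
complex Gaussian matrix. -/
theorem gaussian_permanent_moment_size_duality
    {Ω₁ : Type*} [MeasurableSpace Ω₁] (P₁ : Measure Ω₁) [IsProbabilityMeasure P₁]
    {Ω₂ : Type*} [MeasurableSpace Ω₂] (P₂ : Measure Ω₂) [IsProbabilityMeasure P₂]
    (k t : ℕ)
    (M : Ω₁ → Matrix (Fin k) (Fin k) ℂ) (hM : IsIIDStdComplexGaussianMatrix P₁ M)
    (N : Ω₂ → Matrix (Fin t) (Fin t) ℂ) (hN : IsIIDStdComplexGaussianMatrix P₂ N) :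
    ∫ ω, ‖(M ω).permanent‖ ^ (2*t) ∂P₁
      = ∫ ω, ‖(N ω).permanent‖ ^ (2*k) ∂P₂ :=
  gaussian_permanent_moment_size_duality_general P₁ P₂ k t M hM N hN
end

section
/- The number of nonnegative-integer matrices with row sums μ and column sums ν equals Σ_λ K_{λμ}·K_{λν}, where K denotes Kostka numbers. -/
/-- The sorted (weakly decreasing) list of parts of a partition of `n`. -/
def partsList {n : ℕ} (p : n.Partition) : List ℕ := p.parts.sort (· ≥ ·)

/-- The Kostka number `K_{s,c}`: the number of semistandard Young tableaux whose shape is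
given by the list `s` of row lengths (rows weakly increasing, columns strictly increasing,
entries positive integers), and whose content is `c`, i.e. the entry `m+1` occurs exactly
`c.getD m 0` times. -/
noncomputable def kostka (s c : List ℕ) : ℕ :=
  Nat.card {T : ℕ → ℕ → ℕ //
    (∀ i j, ¬ j < s.getD i 0 → T i j = 0) ∧
    (∀ i j, j < s.getD i 0 → 1 ≤ T i j) ∧
    (∀ i j, j + 1 < s.getD i 0 → T i j ≤ T i (j + 1)) ∧
    (∀ i j, j < s.getD (i + 1) 0 → T i j < T (i + 1) j) ∧
    (∀ m : ℕ, (∑ i ∈ Finset.range s.length,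
        ((Finset.range (s.getD i 0)).filter (fun j => T i j = m + 1)).card)
      = c.getD m 0)}

/-- The number of nonnegative-integer matrices whose vector of row sums is `μ` and whose
vector of column sums is `ν`. -/
noncomputable def countNatMatrices (μ ν : List ℕ) : ℕ :=
  Nat.card {A : Matrix (Fin μ.length) (Fin ν.length) ℕ //
    (∀ i, ∑ j, A i j = μ.get i) ∧ (∀ j, ∑ i, A i j = ν.get j)}

/-!
Fomin's growth diagrams. Fill the corners `(i, j)`, `i ≤ K`, `j ≤ L`, of a `K × L` matrix `A`
with partitions: `∅` along the first row and column, and at each cell a local rule that adds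
`A i j` boxes and can be undone once the three other corners of the cell are known. The last
column is then a chain of horizontal strips from `∅` to some `λ` whose sizes grow by the row sums
of `A`, the last row one whose sizes grow by the column sums, and the whole diagram, hence `A`, is
rebuilt from this pair of chains. A chain of horizontal strips from `∅` to `λ` growing by `μ` is
a semistandard tableau of shape `λ` and content `μ` (its `m`-th strip holds the entries `m + 1`),
so both sides count the same pairs.
-/

open Finset
open scoped Matrix

theorem Finset.lt_card_filter_range_iff {p : ℕ → Prop} [DecidablePred p] {N : ℕ}
    (hp : ∀ a b, a ≤ b → b < N → p b → p a) {x : ℕ} :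
    x < #{y ∈ range N | p y} ↔ x < N ∧ p x := by
  constructor
  · intro hx
    by_contra hpx
    have hsub : {y ∈ range N | p y} ⊆ range x := fun y hy => by
      simp only [mem_filter, mem_range] at hy ⊢
      by_contra hyx
      exact hpx ⟨by omega, hp x y (by omega) hy.1 hy.2⟩
    have := card_le_card hsub
    simp only [card_range] at this
    omega
  · rintro ⟨hxN, hpx⟩
    have hsub : range (x + 1) ⊆ {y ∈ range N | p y} := fun y hy => by
      simp only [mem_filter, mem_range] at hy ⊢
      exact ⟨by omega, hp y x (by omega) hxN hpx⟩
    have := card_le_card hsub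
    simp only [card_range] at this
    omega

theorem List.sum_range_getD (l : List ℕ) :
    ∑ i ∈ Finset.range l.length, l.getD i 0 = l.sum := by
  rw [← Fin.sum_univ_getElem, ← Fin.sum_univ_eq_sum_range]
  exact Finset.sum_congr rfl fun i _ => List.getD_eq_getElem _ _ i.2

theorem Nat.card_pullback_eq_sum {α β γ : Type*} [Fintype γ] (f : α → γ) (g : β → γ)
    [Finite {p : α × β // f p.1 = g p.2}] :
    Nat.card {p : α × β // f p.1 = g p.2} =
      ∑ c, Nat.card {a // f a = c} * Nat.card {b // g b = c} := by
  let e : {p : α × β // f p.1 = g p.2} ≃ Σ c, {a // f a = c} × {b // g b = c} :=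
    { toFun p := ⟨f p.1.1, ⟨p.1.1, rfl⟩, ⟨p.1.2, p.2.symm⟩⟩
      invFun x := ⟨(x.2.1.1, x.2.2.1), x.2.1.2.trans x.2.2.2.symm⟩
      left_inv _ := rfl
      right_inv := by rintro ⟨c, ⟨a, rfl⟩, ⟨b, hb⟩⟩; rfl }
  have : Finite (Σ c, {a // f a = c} × {b // g b = c}) := Finite.of_equiv _ e
  have := fun c => Finite.of_injective _ (sigma_mk_injective (β := fun c =>
    {a // f a = c} × {b // g b = c}) (i := c))
  rw [Nat.card_congr e, Nat.card_sigma]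
  simp only [Nat.card_prod]

namespace RSK

-- Partitions are encoded as weakly decreasing functions `ℕ → ℕ`, their parts padded by zeros.
def IsHorizontalStrip (a b : ℕ → ℕ) : Prop :=
  a ≤ b ∧ ∀ i, b (i + 1) ≤ a i

section HorizontalStrip

variable {a b : ℕ → ℕ}

theorem IsHorizontalStrip.antitone_left (h : IsHorizontalStrip a b) : Antitone a :=
  antitone_nat_of_succ_le fun i => (h.1 (i + 1)).trans (h.2 i)

theorem _root_.Antitone.isHorizontalStrip_self (h : Antitone a) : IsHorizontalStrip a a :=
  ⟨le_rfl, fun i => h i.le_succ⟩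

theorem isHorizontalStrip_zero : IsHorizontalStrip 0 0 :=
  antitone_const.isHorizontalStrip_self

end HorizontalStrip

structure IsStripChain (g : ℕ → ℕ → ℕ) : Prop where
  zero : g 0 = 0
  strip : ∀ i, IsHorizontalStrip (g i) (g (i + 1))

namespace IsStripChain

variable {g : ℕ → ℕ → ℕ}

theorem monotone (hg : IsStripChain g) : Monotone g :=
  monotone_nat_of_le_succ fun i => (hg.strip i).1

theorem antitone_apply (hg : IsStripChain g) (i : ℕ) : Antitone (g i) :=
  (hg.strip i).antitone_left

theorem apply_eq_zero (hg : IsStripChain g) {i t : ℕ} (h : i ≤ t) : g i t = 0 := by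
  induction i generalizing t with
  | zero => simp [hg.zero]
  | succ i ih =>
    obtain ⟨t, rfl⟩ : ∃ t', t = t' + 1 := ⟨t - 1, by omega⟩
    exact Nat.le_zero.mp (ih (t := t) (by omega) ▸ (hg.strip i).2 t)

end IsStripChain

/-! ### Fomin's local rule -/

/-- Row `i + 1` of the new shape receives what row `i` overflows, `min (σ i) (τ i) - ρ i`,
and `k` new boxes enter row `0`. -/
def growthRule (ρ σ τ : ℕ → ℕ) (k : ℕ) : ℕ → ℕ
  | 0 => max (σ 0) (τ 0) + k
  | i + 1 => max (σ (i + 1)) (τ (i + 1)) + (min (σ i) (τ i) - ρ i)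

def shrinkRule (σ τ lam : ℕ → ℕ) : ℕ → ℕ :=
  fun i => max (σ (i + 1)) (τ (i + 1)) + (min (σ i) (τ i) - lam (i + 1))

def shrinkEntry (σ τ lam : ℕ → ℕ) : ℕ :=
  lam 0 - max (σ 0) (τ 0)

section LocalRule

variable {ρ σ τ lam : ℕ → ℕ} {k : ℕ}

@[simp]
theorem growthRule_zero : growthRule ρ σ τ k 0 = max (σ 0) (τ 0) + k := rfl

@[simp]
theorem growthRule_succ (i : ℕ) :
    growthRule ρ σ τ k (i + 1) = max (σ (i + 1)) (τ (i + 1)) + (min (σ i) (τ i) - ρ i) :=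
  rfl

theorem growthRule_comm (ρ σ τ : ℕ → ℕ) (k : ℕ) :
    growthRule ρ σ τ k = growthRule ρ τ σ k := by
  funext i
  cases i <;> simp only [growthRule_zero, growthRule_succ] <;> omega

theorem shrinkRule_comm (σ τ lam : ℕ → ℕ) :
    shrinkRule σ τ lam = shrinkRule τ σ lam := by
  funext i
  simp only [shrinkRule]
  omega

theorem max_le_le_min_of_isHorizontalStrip (h₁ : IsHorizontalStrip ρ σ)
    (h₂ : IsHorizontalStrip ρ τ) (i : ℕ) :
    max (σ (i + 1)) (τ (i + 1)) ≤ ρ i ∧ ρ i ≤ min (σ i) (τ i) :=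
  ⟨max_le (h₁.2 i) (h₂.2 i), le_min (h₁.1 i) (h₂.1 i)⟩

theorem max_le_le_min_of_isHorizontalStrip' (h₁ : IsHorizontalStrip σ lam)
    (h₂ : IsHorizontalStrip τ lam) (i : ℕ) :
    max (σ i) (τ i) ≤ lam i ∧ lam (i + 1) ≤ min (σ i) (τ i) :=
  ⟨max_le (h₁.1 i) (h₂.1 i), le_min (h₁.2 i) (h₂.2 i)⟩

theorem shrinkEntry_growthRule : shrinkEntry σ τ (growthRule ρ σ τ k) = k := by
  simp only [shrinkEntry, growthRule_zero]
  omega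

section Forward

variable (h₁ : IsHorizontalStrip ρ σ) (h₂ : IsHorizontalStrip ρ τ)
include h₁ h₂

theorem isHorizontalStrip_growthRule_left : IsHorizontalStrip σ (growthRule ρ σ τ k) := by
  have hb := max_le_le_min_of_isHorizontalStrip h₁ h₂
  refine ⟨fun i => ?_, fun i => ?_⟩
  · cases i with
    | zero => simp only [growthRule_zero]; omega
    | succ i => have := hb i; simp only [growthRule_succ]; omega
  · have := hb i; simp only [growthRule_succ]; omega

theorem isHorizontalStrip_growthRule_right : IsHorizontalStrip τ (growthRule ρ σ τ k) :=
  growthRule_comm ρ σ τ k ▸ isHorizontalStrip_growthRule_left h₂ h₁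

theorem shrinkRule_growthRule : shrinkRule σ τ (growthRule ρ σ τ k) = ρ := by
  funext i
  have := max_le_le_min_of_isHorizontalStrip h₁ h₂ i
  simp only [shrinkRule, growthRule_succ]
  omega

theorem sum_growthRule_add_sum {N : ℕ} (hσ : σ N = 0) (hτ : τ N = 0) :
    ∑ t ∈ range (N + 1), growthRule ρ σ τ k t + ∑ t ∈ range (N + 1), ρ t =
      ∑ t ∈ range (N + 1), σ t + ∑ t ∈ range (N + 1), τ t + k := by
  have hb := max_le_le_min_of_isHorizontalStrip h₁ h₂
  have key : ∀ M, ∑ t ∈ range (M + 1), growthRule ρ σ τ k t + ∑ t ∈ range M, ρ t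
      + min (σ M) (τ M) = ∑ t ∈ range (M + 1), σ t + ∑ t ∈ range (M + 1), τ t + k := by
    intro M
    induction M with
    | zero => simp only [zero_add, sum_range_one, range_zero, sum_empty, growthRule]; omega
    | succ M ih =>
      rw [sum_range_succ _ (M + 1), sum_range_succ ρ, sum_range_succ σ (M + 1),
        sum_range_succ τ (M + 1)]
      have := hb M
      rw [growthRule_succ]
      omega
  have hρ : ρ N = 0 := Nat.le_zero.mp (hσ ▸ h₁.1 N)
  rw [sum_range_succ ρ, hρ, add_zero, ← key N, hσ, hτ, min_self, add_zero]

end Forward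

section Backward

variable (h₁ : IsHorizontalStrip σ lam) (h₂ : IsHorizontalStrip τ lam)
include h₁ h₂

theorem isHorizontalStrip_shrinkRule_left : IsHorizontalStrip (shrinkRule σ τ lam) σ := by
  have hb := max_le_le_min_of_isHorizontalStrip' h₁ h₂
  refine ⟨fun i => ?_, fun i => ?_⟩ <;>
  · have := hb i; have := hb (i + 1); simp only [shrinkRule]; omega

theorem isHorizontalStrip_shrinkRule_right : IsHorizontalStrip (shrinkRule σ τ lam) τ :=
  shrinkRule_comm σ τ lam ▸ isHorizontalStrip_shrinkRule_left h₂ h₁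

theorem growthRule_shrinkRule :
    growthRule (shrinkRule σ τ lam) σ τ (shrinkEntry σ τ lam) = lam := by
  funext i
  have hb := max_le_le_min_of_isHorizontalStrip' h₁ h₂
  cases i with
  | zero => have := hb 0; simp only [growthRule_zero, shrinkEntry]; omega
  | succ i => have := hb i; have := hb (i + 1); simp only [growthRule_succ, shrinkRule]; omega

end Backward

end LocalRule

/-! ### The growth diagram of a matrix -/

/-- `growthGrid A i j` is the RSK shape of the corner `{(i', j') | i' < i, j' < j}` of `A`. -/
def growthGrid (A : ℕ → ℕ → ℕ) : ℕ → ℕ → ℕ → ℕ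
  | 0, _ => 0
  | _ + 1, 0 => 0
  | i + 1, j + 1 =>
    growthRule (growthGrid A i j) (growthGrid A (i + 1) j) (growthGrid A i (j + 1)) (A i j)

section GrowthGrid

variable (A : ℕ → ℕ → ℕ)

@[simp]
theorem growthGrid_zero_left (j : ℕ) : growthGrid A 0 j = 0 := by
  rw [growthGrid]

@[simp]
theorem growthGrid_zero_right (i : ℕ) : growthGrid A i 0 = 0 := by
  cases i <;> rw [growthGrid]

theorem growthGrid_succ_succ (i j : ℕ) :
    growthGrid A (i + 1) (j + 1) = growthRule (growthGrid A i j) (growthGrid A (i + 1) j)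
      (growthGrid A i (j + 1)) (A i j) := by
  rw [growthGrid]

theorem growthGrid_transpose (i j : ℕ) :
    growthGrid (fun i j => A j i) j i = growthGrid A i j := by
  induction i generalizing j with
  | zero => simp
  | succ i ihi =>
    induction j with
    | zero => simp
    | succ j ihj => rw [growthGrid_succ_succ, growthGrid_succ_succ, ihi, ihi, ihj, growthRule_comm]

theorem isHorizontalStrip_growthGrid (i j : ℕ) :
    IsHorizontalStrip (growthGrid A i j) (growthGrid A (i + 1) j) ∧
      IsHorizontalStrip (growthGrid A i j) (growthGrid A i (j + 1)) := by
  induction i generalizing j with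
  | zero =>
    induction j with
    | zero => simpa using isHorizontalStrip_zero
    | succ j ih =>
      refine ⟨?_, by simpa using isHorizontalStrip_zero⟩
      rw [growthGrid_succ_succ]
      exact isHorizontalStrip_growthRule_right ih.1 ih.2
  | succ i ihi =>
    induction j with
    | zero =>
      refine ⟨by simpa using isHorizontalStrip_zero, ?_⟩
      rw [growthGrid_succ_succ]
      exact isHorizontalStrip_growthRule_left (ihi 0).1 (ihi 0).2
    | succ j ihj =>
      constructor
      · rw [growthGrid_succ_succ A (i + 1)]
        exact isHorizontalStrip_growthRule_right ihj.1 ihj.2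
      · rw [growthGrid_succ_succ A i (j + 1)]
        exact isHorizontalStrip_growthRule_left (ihi (j + 1)).1 (ihi (j + 1)).2

theorem isStripChain_growthGrid (j : ℕ) : IsStripChain fun i => growthGrid A i j :=
  ⟨growthGrid_zero_left A j, fun i => (isHorizontalStrip_growthGrid A i j).1⟩

theorem growthGrid_apply_eq_zero {i t : ℕ} (h : i ≤ t) (j : ℕ) : growthGrid A i j t = 0 :=
  (isStripChain_growthGrid A j).apply_eq_zero h

theorem sum_growthGrid_succ_succ {i N : ℕ} (hN : i + 1 ≤ N) (j : ℕ) :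
    ∑ t ∈ range (N + 1), growthGrid A (i + 1) (j + 1) t +
        ∑ t ∈ range (N + 1), growthGrid A i j t =
      ∑ t ∈ range (N + 1), growthGrid A (i + 1) j t +
        ∑ t ∈ range (N + 1), growthGrid A i (j + 1) t + A i j := by
  rw [growthGrid_succ_succ]
  exact sum_growthRule_add_sum (isHorizontalStrip_growthGrid A i j).1
    (isHorizontalStrip_growthGrid A i j).2
    (growthGrid_apply_eq_zero A hN j) (growthGrid_apply_eq_zero A (by omega) (j + 1))

theorem sum_growthGrid_succ_left {i N : ℕ} (hN : i + 1 ≤ N) (j : ℕ) :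
    ∑ t ∈ range (N + 1), growthGrid A (i + 1) j t =
      ∑ t ∈ range (N + 1), growthGrid A i j t + ∑ j' ∈ range j, A i j' := by
  induction j with
  | zero => simp
  | succ j ih =>
    have := sum_growthGrid_succ_succ A hN j
    rw [sum_range_succ (A i)]
    omega

end GrowthGrid

/-! ### Rebuilding a growth diagram from its last row and column -/

def shrinkGrid (P Q : ℕ → ℕ → ℕ) (K L i j : ℕ) : ℕ → ℕ :=
  if K ≤ i then P j
  else if L ≤ j then Q i
  else shrinkRule (shrinkGrid P Q K L (i + 1) j) (shrinkGrid P Q K L i (j + 1))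
    (shrinkGrid P Q K L (i + 1) (j + 1))
termination_by (K - i) + (L - j)

def shrinkMatrix (P Q : ℕ → ℕ → ℕ) (K L i j : ℕ) : ℕ :=
  shrinkEntry (shrinkGrid P Q K L (i + 1) j) (shrinkGrid P Q K L i (j + 1))
    (shrinkGrid P Q K L (i + 1) (j + 1))

/-- `P` and `Q` can be the last row (`i = K`) and the last column (`j = L`) of a growth diagram. -/
structure IsBoundary (K L : ℕ) (P Q : ℕ → ℕ → ℕ) : Prop where
  row : IsStripChain P
  col : IsStripChain Q
  row_stable : ∀ j, L ≤ j → P j = P L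
  corner : P L = Q K

section ShrinkGrid

variable {P Q : ℕ → ℕ → ℕ} {K L : ℕ}

theorem shrinkGrid_of_le {i : ℕ} (hi : K ≤ i) (j : ℕ) : shrinkGrid P Q K L i j = P j := by
  rw [shrinkGrid, if_pos hi]

theorem shrinkGrid_of_lt_of_le {i j : ℕ} (hi : i < K) (hj : L ≤ j) :
    shrinkGrid P Q K L i j = Q i := by
  rw [shrinkGrid, if_neg (by omega), if_pos hj]

theorem shrinkGrid_of_lt_of_lt {i j : ℕ} (hi : i < K) (hj : j < L) :
    shrinkGrid P Q K L i j = shrinkRule (shrinkGrid P Q K L (i + 1) j)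
      (shrinkGrid P Q K L i (j + 1)) (shrinkGrid P Q K L (i + 1) (j + 1)) := by
  rw [shrinkGrid, if_neg (by omega), if_neg (by omega)]

namespace IsBoundary

variable (hb : IsBoundary K L P Q)
include hb

theorem shrinkGrid_of_le_right {i j : ℕ} (hi : i ≤ K) (hj : L ≤ j) :
    shrinkGrid P Q K L i j = Q i := by
  rcases hi.lt_or_eq with hi | rfl
  · exact shrinkGrid_of_lt_of_le hi hj
  · rw [shrinkGrid_of_le le_rfl, hb.row_stable j hj, hb.corner]

theorem isHorizontalStrip_shrinkGrid (i j : ℕ) :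
    IsHorizontalStrip (shrinkGrid P Q K L i j) (shrinkGrid P Q K L (i + 1) j) ∧
      IsHorizontalStrip (shrinkGrid P Q K L i j) (shrinkGrid P Q K L i (j + 1)) := by
  induction hd : (K - i) + (L - j) using Nat.strong_induction_on generalizing i j with
  | _ d ih =>
  by_cases hi : K ≤ i
  · rw [shrinkGrid_of_le hi, shrinkGrid_of_le (by omega), shrinkGrid_of_le hi]
    exact ⟨(hb.row.antitone_apply j).isHorizontalStrip_self, hb.row.strip j⟩
  by_cases hj : L ≤ j
  · rw [hb.shrinkGrid_of_le_right (i := i + 1) (by omega) hj,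
      shrinkGrid_of_lt_of_le (j := j) (by omega) hj,
      shrinkGrid_of_lt_of_le (j := j + 1) (by omega) (by omega)]
    exact ⟨hb.col.strip i, (hb.col.antitone_apply i).isHorizontalStrip_self⟩
  have hσ := (ih _ (by omega) (i + 1) j rfl).2
  have hτ := (ih _ (by omega) i (j + 1) rfl).1
  rw [shrinkGrid_of_lt_of_lt (by omega) (by omega)]
  exact ⟨isHorizontalStrip_shrinkRule_left hσ hτ, isHorizontalStrip_shrinkRule_right hσ hτ⟩

theorem shrinkGrid_zero_right (i : ℕ) : shrinkGrid P Q K L i 0 = 0 := by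
  have hmono : Monotone fun i => shrinkGrid P Q K L i 0 :=
    monotone_nat_of_le_succ fun i => (hb.isHorizontalStrip_shrinkGrid i 0).1.1
  have : shrinkGrid P Q K L i 0 ≤ shrinkGrid P Q K L (i + K) 0 := hmono (Nat.le_add_right i K)
  rw [shrinkGrid_of_le (i := i + K) (by omega), hb.row.zero] at this
  exact le_antisymm this fun _ => Nat.zero_le _

theorem shrinkGrid_zero_left (j : ℕ) : shrinkGrid P Q K L 0 j = 0 := by
  have hmono : Monotone fun j => shrinkGrid P Q K L 0 j :=
    monotone_nat_of_le_succ fun j => (hb.isHorizontalStrip_shrinkGrid 0 j).2.1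
  have : shrinkGrid P Q K L 0 j ≤ shrinkGrid P Q K L 0 (j + L) := hmono (Nat.le_add_right j L)
  rw [hb.shrinkGrid_of_le_right (j := j + L) (Nat.zero_le K) (by omega), hb.col.zero] at this
  exact le_antisymm this fun _ => Nat.zero_le _

theorem growthGrid_eq_shrinkGrid {A : ℕ → ℕ → ℕ}
    (hA : ∀ i < K, ∀ j < L, A i j = shrinkMatrix P Q K L i j) {i j : ℕ} (hi : i ≤ K)
    (hj : j ≤ L) : growthGrid A i j = shrinkGrid P Q K L i j := by
  induction i generalizing j with
  | zero => rw [growthGrid_zero_left, hb.shrinkGrid_zero_left]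
  | succ i ihi =>
    induction j with
    | zero => rw [growthGrid_zero_right, hb.shrinkGrid_zero_right]
    | succ j ihj =>
      have hσ := (hb.isHorizontalStrip_shrinkGrid (i + 1) j).2
      have hτ := (hb.isHorizontalStrip_shrinkGrid i (j + 1)).1
      rw [growthGrid_succ_succ, ihi (by omega) (by omega), ihi (by omega) hj, ihj (by omega),
        hA i (by omega) j (by omega), shrinkMatrix, shrinkGrid_of_lt_of_lt (by omega) (by omega)]
      exact growthRule_shrinkRule hσ hτ

end IsBoundary

theorem shrinkGrid_growthGrid (A : ℕ → ℕ → ℕ) {i j : ℕ} (hi : i ≤ K) (hj : j ≤ L) :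
    shrinkGrid (fun j => growthGrid A K (min j L)) (fun i => growthGrid A (min i K) L) K L i j =
      growthGrid A i j := by
  induction hd : (K - i) + (L - j) using Nat.strong_induction_on generalizing i j with
  | _ d ih =>
  by_cases hi' : K ≤ i
  · rw [shrinkGrid_of_le hi', min_eq_left hj, show i = K by omega]
  by_cases hj' : L ≤ j
  · rw [shrinkGrid_of_lt_of_le (by omega) hj', min_eq_left hi, show j = L by omega]
  have hρσ := (isHorizontalStrip_growthGrid A i j).1
  have hρτ := (isHorizontalStrip_growthGrid A i j).2
  rw [shrinkGrid_of_lt_of_lt (by omega) (by omega), ih _ (by omega) (by omega) hj rfl,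
    ih _ (by omega) hi (by omega) rfl, ih _ (by omega) (by omega) (by omega) rfl,
    growthGrid_succ_succ, shrinkRule_growthRule hρσ hρτ]

theorem shrinkMatrix_growthGrid (A : ℕ → ℕ → ℕ) {i j : ℕ} (hi : i < K) (hj : j < L) :
    shrinkMatrix (fun j => growthGrid A K (min j L)) (fun i => growthGrid A (min i K) L) K L i j =
      A i j := by
  rw [shrinkMatrix, shrinkGrid_growthGrid A (by omega) hj.le, shrinkGrid_growthGrid A hi.le hj,
    shrinkGrid_growthGrid A hi hj, growthGrid_succ_succ, shrinkEntry_growthRule]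

end ShrinkGrid

/-! ### Tableaux as chains of horizontal strips -/

-- Sizes are summed over the rows `< N`, which must include every nonzero row of the chain.
structure IsContentChain (N : ℕ) (c : List ℕ) (g : ℕ → ℕ → ℕ) : Prop
    extends IsStripChain g where
  sum_succ : ∀ i, ∑ t ∈ range N, g (i + 1) t = ∑ t ∈ range N, g i t + c.getD i 0
  stable : ∀ i, c.length ≤ i → g i = g c.length

structure IsSSYT (s c : List ℕ) (T : ℕ → ℕ → ℕ) : Prop where
  eq_zero : ∀ i j, ¬ j < s.getD i 0 → T i j = 0
  one_le : ∀ i j, j < s.getD i 0 → 1 ≤ T i j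
  row_mono : ∀ i j, j + 1 < s.getD i 0 → T i j ≤ T i (j + 1)
  col_strict : ∀ i j, j < s.getD (i + 1) 0 → T i j < T (i + 1) j
  content : ∀ m,
    ∑ i ∈ range s.length, #{j ∈ range (s.getD i 0) | T i j = m + 1} = c.getD m 0

theorem kostka_eq_card (s c : List ℕ) : kostka s c = Nat.card {T // IsSSYT s c T} :=
  Nat.card_congr <| Equiv.subtypeEquivRight fun _ =>
    ⟨fun ⟨h₁, h₂, h₃, h₄, h₅⟩ => ⟨h₁, h₂, h₃, h₄, h₅⟩,
      fun h => ⟨h.1, h.2, h.3, h.4, h.5⟩⟩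

def chainOfTableau (s : List ℕ) (T : ℕ → ℕ → ℕ) (m t : ℕ) : ℕ :=
  #{j ∈ range (s.getD t 0) | T t j ≤ m}

/-- Cell `(t, j)` is filled with the index of the first strip of `g` containing it. -/
def tableauOfChain (s c : List ℕ) (g : ℕ → ℕ → ℕ) (t j : ℕ) : ℕ :=
  if j < s.getD t 0 then #{m ∈ range (c.length + 1) | g m t ≤ j} else 0

section TableauToChain

variable {s c : List ℕ} {T : ℕ → ℕ → ℕ} (hT : IsSSYT s c T)
include hT

theorem IsSSYT.lt_chainOfTableau_iff {m t j : ℕ} (hj : j < s.getD t 0) :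
    j < chainOfTableau s T m t ↔ T t j ≤ m := by
  have hmono : ∀ a b, a ≤ b → b < s.getD t 0 → T t a ≤ T t b := fun a b hab hb => by
    induction b, hab using Nat.le_induction with
    | base => rfl
    | succ b _ ih => exact (ih (by omega)).trans (hT.row_mono t b hb)
  rw [chainOfTableau, lt_card_filter_range_iff fun a b hab hb h => (hmono a b hab hb).trans h]
  exact and_iff_right hj

theorem IsSSYT.le_length {t j : ℕ} (hj : j < s.getD t 0) : T t j ≤ c.length := by
  by_contra! h
  have ht : t < s.length := by
    by_contra! ht
    rw [List.getD_eq_default _ _ ht] at hj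
    omega
  have hcontent := hT.content (T t j - 1)
  rw [List.getD_eq_default _ _ (by omega), sum_eq_zero_iff] at hcontent
  have := card_eq_zero.mp (hcontent t (mem_range.mpr ht))
  have hmem : j ∈ {j' ∈ range (s.getD t 0) | T t j' = T t j - 1 + 1} := by
    simp only [mem_filter, mem_range]
    exact ⟨hj, by have := hT.one_le t j hj; omega⟩
  rw [this] at hmem
  exact notMem_empty j hmem

theorem IsSSYT.chainOfTableau_zero : chainOfTableau s T 0 = 0 := by
  funext t
  simp only [chainOfTableau, Pi.zero_apply, card_eq_zero, filter_eq_empty_iff, mem_range]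
  intro j hj
  have := hT.one_le t j hj
  omega

theorem IsSSYT.isHorizontalStrip_chainOfTableau (hs : Antitone fun t => s.getD t 0) (m : ℕ) :
    IsHorizontalStrip (chainOfTableau s T m) (chainOfTableau s T (m + 1)) := by
  refine ⟨fun t => card_le_card fun j => ?_, fun t => ?_⟩
  · simp only [mem_filter, mem_range]
    omega
  · by_contra! h
    set a := chainOfTableau s T m t
    have hlen : chainOfTableau s T (m + 1) (t + 1) ≤ s.getD (t + 1) 0 :=
      (card_filter_le _ _).trans (card_range _).le
    have hcol := hT.col_strict t a (by omega)
    have h₁ := (hT.lt_chainOfTableau_iff (m := m + 1) (by omega)).mp h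
    have h₂ := (hT.lt_chainOfTableau_iff (m := m) (t := t) (j := a)
      ((by omega : a < s.getD (t + 1) 0).trans_le (hs t.le_succ))).not.mp (lt_irrefl a)
    omega

theorem IsSSYT.sum_chainOfTableau_succ {B : ℕ} (hB : s.length ≤ B) (m : ℕ) :
    ∑ t ∈ range B, chainOfTableau s T (m + 1) t =
      ∑ t ∈ range B, chainOfTableau s T m t + c.getD m 0 := by
  have hsplit : ∀ t, chainOfTableau s T (m + 1) t =
      chainOfTableau s T m t + #{j ∈ range (s.getD t 0) | T t j = m + 1} := fun t => by
    rw [chainOfTableau, chainOfTableau, ← card_union_of_disjoint]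
    · congr 1
      ext j
      simp only [mem_union, mem_filter, mem_range]
      omega
    · exact disjoint_filter.mpr fun _ _ h₁ h₂ => by omega
  rw [sum_congr rfl fun t _ => hsplit t, sum_add_distrib, ← hT.content m]
  congr 1
  refine (sum_subset (range_subset_range.mpr hB) fun t _ ht => ?_).symm
  rw [List.getD_eq_default _ _ (by simpa using ht)]
  simp

end TableauToChain

theorem monotone_chainOfTableau (s : List ℕ) (T : ℕ → ℕ → ℕ) :
    Monotone (chainOfTableau s T) :=
  fun _ _ hm _ => card_le_card <| monotone_filter_right _ fun _ _ h => h.trans hm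

theorem IsSSYT.chainOfTableau_of_length_le {s c : List ℕ} {T : ℕ → ℕ → ℕ}
    (hT : IsSSYT s c T) {m : ℕ} (hm : c.length ≤ m) :
    chainOfTableau s T m = fun t => s.getD t 0 := by
  funext t
  rw [chainOfTableau, filter_true_of_mem fun j hj => (hT.le_length (mem_range.mp hj)).trans hm,
    card_range]

theorem IsSSYT.isContentChain_chainOfTableau {s c : List ℕ} {T : ℕ → ℕ → ℕ}
    (hT : IsSSYT s c T) (hs : Antitone fun t => s.getD t 0) {B : ℕ} (hB : s.length ≤ B) :
    IsContentChain B c (chainOfTableau s T) where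
  zero := hT.chainOfTableau_zero
  strip := hT.isHorizontalStrip_chainOfTableau hs
  sum_succ := hT.sum_chainOfTableau_succ hB
  stable _ hi := by rw [hT.chainOfTableau_of_length_le hi, hT.chainOfTableau_of_length_le le_rfl]

section ChainToTableau

variable {s c : List ℕ} {g : ℕ → ℕ → ℕ}

theorem tableauOfChain_le_iff (hg : Monotone g) {m t j : ℕ} (hj : j < s.getD t 0)
    (hm : m ≤ c.length) : tableauOfChain s c g t j ≤ m ↔ j < g m t := by
  rw [tableauOfChain, if_pos hj, ← not_lt,
    lt_card_filter_range_iff fun a b hab _ h => (hg hab t).trans h]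
  simp only [not_and, not_le]
  exact ⟨fun h => h (by omega), fun h _ => h⟩

variable {B : ℕ} (hg : IsContentChain B c g) (hend : g c.length = fun t => s.getD t 0)
include hg hend

theorem IsContentChain.le_getD (m t : ℕ) : g m t ≤ s.getD t 0 := by
  rcases le_total m c.length with hm | hm
  · exact (congrFun hend t) ▸ hg.monotone hm t
  · rw [hg.stable m hm, hend]

theorem IsContentChain.tableauOfChain_le_length {t j : ℕ} (hj : j < s.getD t 0) :
    tableauOfChain s c g t j ≤ c.length :=
  (tableauOfChain_le_iff hg.monotone hj le_rfl).mpr (by rw [hend]; exact hj)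

theorem IsContentChain.card_tableauOfChain_eq_add {m : ℕ} (hm : m + 1 ≤ c.length) (t : ℕ) :
    #{j ∈ range (s.getD t 0) | tableauOfChain s c g t j = m + 1} + g m t = g (m + 1) t := by
  have hIco : {j ∈ range (s.getD t 0) | tableauOfChain s c g t j = m + 1} =
      Ico (g m t) (g (m + 1) t) := by
    ext j
    simp only [mem_filter, mem_range, mem_Ico]
    constructor
    · rintro ⟨hj, h⟩
      have h₁ := tableauOfChain_le_iff hg.monotone hj hm
      have h₂ := tableauOfChain_le_iff hg.monotone hj (c := c) (m := m) (by omega)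
      omega
    · rintro ⟨h₁, h₂⟩
      have hj := h₂.trans_le (hg.le_getD hend (m + 1) t)
      have h₃ := tableauOfChain_le_iff hg.monotone hj hm
      have h₄ := tableauOfChain_le_iff hg.monotone hj (c := c) (m := m) (by omega)
      exact ⟨hj, by omega⟩
  rw [hIco, Nat.card_Ico]
  have : g m t ≤ g (m + 1) t := hg.monotone m.le_succ t
  omega

theorem IsContentChain.isSSYT_tableauOfChain (hs : Antitone fun t => s.getD t 0)
    (hB : s.length ≤ B) : IsSSYT s c (tableauOfChain s c g) where
  eq_zero _ _ hj := if_neg hj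
  one_le t j hj := by
    by_contra! h
    have := (tableauOfChain_le_iff (c := c) hg.monotone hj (Nat.zero_le _)).mp (by omega)
    rw [hg.zero] at this
    exact Nat.not_lt_zero _ this
  row_mono t j hj := by
    rw [tableauOfChain, tableauOfChain, if_pos (by omega), if_pos hj]
    exact card_le_card <| monotone_filter_right _ fun _ _ h => h.trans j.le_succ
  col_strict t j hj := by
    set v := tableauOfChain s c g (t + 1) j
    have hj' : j < s.getD t 0 := hj.trans_le (hs t.le_succ)
    have hv : v ≤ c.length := hg.tableauOfChain_le_length hend hj
    have h₁ := (tableauOfChain_le_iff hg.monotone hj hv).mp le_rfl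
    have hv₀ : v ≠ 0 := fun h => by
      rw [h, hg.zero] at h₁
      exact Nat.not_lt_zero _ h₁
    have h₂ := (hg.strip (v - 1)).2 t
    rw [Nat.sub_add_cancel (Nat.pos_of_ne_zero hv₀)] at h₂
    have := (tableauOfChain_le_iff (c := c) hg.monotone hj' (m := v - 1) (by omega)).mpr (by omega)
    omega
  content m := by
    rcases lt_or_ge m c.length with hm | hm
    · have hsum := hg.sum_succ m
      have hcount := fun t => hg.card_tableauOfChain_eq_add hend hm t
      rw [← sum_congr rfl fun t _ => hcount t, sum_add_distrib] at hsum
      rw [sum_subset (range_subset_range.mpr hB) fun t _ ht => by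
        rw [List.getD_eq_default _ _ (by simpa using ht)]; simp]
      omega
    · rw [List.getD_eq_default _ _ hm]
      refine sum_eq_zero fun t _ => card_eq_zero.mpr <| filter_eq_empty_iff.mpr fun j hj => ?_
      have := hg.tableauOfChain_le_length hend (mem_range.mp hj)
      omega

theorem IsContentChain.chainOfTableau_tableauOfChain :
    chainOfTableau s (tableauOfChain s c g) = g := by
  funext m t
  rcases le_total m c.length with hm | hm
  · have : {j ∈ range (s.getD t 0) | tableauOfChain s c g t j ≤ m} = range (g m t) := by
      ext j
      simp only [mem_filter, mem_range]
      constructor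
      · rintro ⟨hj, h⟩
        exact (tableauOfChain_le_iff hg.monotone hj hm).mp h
      · intro h
        have hj := h.trans_le (hg.le_getD hend m t)
        exact ⟨hj, (tableauOfChain_le_iff hg.monotone hj hm).mpr h⟩
    rw [chainOfTableau, this, card_range]
  · rw [chainOfTableau, filter_true_of_mem fun j hj =>
      (hg.tableauOfChain_le_length hend (mem_range.mp hj)).trans hm, card_range, hg.stable m hm,
      hend]

end ChainToTableau

theorem IsSSYT.tableauOfChain_chainOfTableau {s c : List ℕ} {T : ℕ → ℕ → ℕ}
    (hT : IsSSYT s c T) :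
    tableauOfChain s c (chainOfTableau s T) = T := by
  funext t j
  by_cases hj : j < s.getD t 0
  · have hiff : ∀ m ≤ c.length,
        tableauOfChain s c (chainOfTableau s T) t j ≤ m ↔ T t j ≤ m := fun m hm =>
      (tableauOfChain_le_iff (monotone_chainOfTableau s T) hj hm).trans
        (hT.lt_chainOfTableau_iff hj)
    have h₁ := (hiff _ (hT.le_length hj)).mpr le_rfl
    have h₂ := (hiff _ ((tableauOfChain_le_iff (monotone_chainOfTableau s T) hj le_rfl).mpr
      (by rw [hT.chainOfTableau_of_length_le le_rfl]; exact hj))).mp le_rfl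
    omega
  · rw [tableauOfChain, if_neg hj, hT.eq_zero t j hj]

def ssytEquivContentChain {s c : List ℕ} (hs : Antitone fun t => s.getD t 0) {B : ℕ}
    (hB : s.length ≤ B) :
    {T // IsSSYT s c T} ≃ {g // IsContentChain B c g ∧ g c.length = fun t => s.getD t 0} where
  toFun T := ⟨chainOfTableau s T, T.2.isContentChain_chainOfTableau hs hB,
    T.2.chainOfTableau_of_length_le le_rfl⟩
  invFun g := ⟨tableauOfChain s c g, g.2.1.isSSYT_tableauOfChain g.2.2 hs hB⟩
  left_inv T := Subtype.ext T.2.tableauOfChain_chainOfTableau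
  right_inv g := Subtype.ext (g.2.1.chainOfTableau_tableauOfChain g.2.2)

/-! ### Partitions as weakly decreasing functions -/

section PartsFun

variable {n : ℕ}

def partsFun (l : n.Partition) (t : ℕ) : ℕ :=
  (partsList l).getD t 0

theorem coe_partsList (l : n.Partition) : (partsList l : Multiset ℕ) = l.parts :=
  Multiset.sort_eq _ _

theorem pos_of_mem_partsList {l : n.Partition} {x : ℕ} (hx : x ∈ partsList l) : 0 < x :=
  l.parts_pos (by rwa [← coe_partsList, Multiset.mem_coe])

theorem sum_partsList (l : n.Partition) : (partsList l).sum = n := by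
  rw [← Multiset.sum_coe, coe_partsList, l.parts_sum]

theorem length_partsList_le (l : n.Partition) : (partsList l).length ≤ n := by
  have := List.length_le_sum_of_one_le _ fun _ hx => pos_of_mem_partsList (l := l) hx
  rwa [sum_partsList] at this

theorem antitone_partsFun (l : n.Partition) : Antitone (partsFun l) := by
  refine antitone_nat_of_succ_le fun t => ?_
  simp only [partsFun, List.getD_eq_getElem?_getD]
  rcases lt_or_ge (t + 1) (partsList l).length with h | h
  · rw [List.getElem?_eq_getElem h, List.getElem?_eq_getElem (by omega), Option.getD_some,
      Option.getD_some]
    exact List.pairwise_iff_getElem.mp (Multiset.pairwise_sort l.parts (· ≥ ·)) t (t + 1) _ _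
      t.lt_succ_self
  · rw [List.getElem?_eq_none h, Option.getD_none]
    exact Nat.zero_le _

theorem getElem?_partsList (l : n.Partition) (t : ℕ) :
    (partsList l)[t]? = if partsFun l t = 0 then none else some (partsFun l t) := by
  rw [partsFun, List.getD_eq_getElem?_getD]
  rcases lt_or_ge t (partsList l).length with h | h
  · have := pos_of_mem_partsList (List.getElem_mem h)
    rw [List.getElem?_eq_getElem h, Option.getD_some, if_neg this.ne']
  · rw [List.getElem?_eq_none h, Option.getD_none, if_pos rfl]

theorem partsFun_injective : Function.Injective (partsFun (n := n)) := fun p q h => by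
  have : partsList p = partsList q := List.ext_getElem? fun t => by
    rw [getElem?_partsList, getElem?_partsList, h]
  exact Nat.Partition.ext (by rw [← coe_partsList, this, coe_partsList])

/-- The partition of `n` whose parts are the nonzero values of `f`. -/
def ofAntitone (f : ℕ → ℕ) (hf : Antitone f) (hn : f n = 0)
    (hsum : ∑ t ∈ range n, f t = n) : n.Partition where
  parts := (Multiset.range (Nat.find ⟨n, hn⟩)).map f
  parts_pos hx := by
    obtain ⟨t, ht, rfl⟩ := Multiset.mem_map.mp hx
    exact Nat.pos_of_ne_zero (Nat.find_min (p := fun t => f t = 0) _ (Multiset.mem_range.mp ht))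
  parts_sum := by
    change ∑ t ∈ range (Nat.find ⟨n, hn⟩), f t = n
    refine Eq.trans ?_ hsum
    refine sum_subset (range_subset_range.mpr (Nat.find_min' _ hn)) fun t _ ht => ?_
    exact Nat.le_zero.mp
      (Nat.find_spec (p := fun t => f t = 0) ⟨n, hn⟩ ▸ hf (not_lt.mp (mem_range.not.mp ht)))

theorem partsFun_ofAntitone (f : ℕ → ℕ) (hf : Antitone f) (hn : f n = 0)
    (hsum : ∑ t ∈ range n, f t = n) : partsFun (ofAntitone f hf hn hsum) = f := by
  have hex : ∃ t, f t = 0 := ⟨n, hn⟩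
  have hsorted : partsList (ofAntitone f hf hn hsum) = (List.range (Nat.find hex)).map f :=
    List.mergeSort_eq_self (fun a b : ℕ => a ≥ b) <|
      (List.pairwise_map (R := (· ≥ ·))).mpr <|
      List.pairwise_lt_range.imp fun h => hf h.le
  funext t
  rw [partsFun, hsorted, List.getD_eq_getElem?_getD, List.getElem?_map]
  rcases lt_or_ge t (Nat.find hex) with ht | ht
  · rw [List.getElem?_range ht, Option.map_some, Option.getD_some]
  · rw [List.getElem?_eq_none (by simpa using ht), Option.map_none, Option.getD_none]
    exact (Nat.le_zero.mp (Nat.find_spec hex ▸ hf ht)).symm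

end PartsFun

/-! ### Matrices and pairs of chains -/

def rowChain (A : ℕ → ℕ → ℕ) (K L i : ℕ) : ℕ → ℕ :=
  growthGrid A (min i K) L

section RowChain

variable {A : ℕ → ℕ → ℕ} {K L : ℕ}

theorem rowChain_transpose (A : ℕ → ℕ → ℕ) (K L : ℕ) :
    rowChain (fun i j => A j i) L K = fun j => growthGrid A K (min j L) := by
  funext j
  exact growthGrid_transpose A K (min j L)

theorem isContentChain_rowChain {n : ℕ} {c : List ℕ} (hc : c.length = K) (hK : K ≤ n)
    (hrow : ∀ i < K, ∑ j ∈ range L, A i j = c.getD i 0) :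
    IsContentChain (n + 1) c (rowChain A K L) where
  zero := by simp [rowChain]
  strip i := by
    rcases lt_or_ge i K with hi | hi
    · rw [rowChain, rowChain, min_eq_left hi.le, min_eq_left hi]
      exact (isHorizontalStrip_growthGrid A i L).1
    · rw [rowChain, rowChain, min_eq_right hi, min_eq_right (by omega)]
      exact (isHorizontalStrip_growthGrid A K L).2.antitone_left.isHorizontalStrip_self
  sum_succ i := by
    rcases lt_or_ge i K with hi | hi
    · rw [rowChain, rowChain, min_eq_left hi.le, min_eq_left hi,
        sum_growthGrid_succ_left A (by omega) L, hrow i hi]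
    · rw [rowChain, rowChain, min_eq_right hi, min_eq_right (by omega),
        List.getD_eq_default _ _ (by omega), add_zero]
  stable i hi := by rw [rowChain, rowChain, hc, min_eq_right (by omega), min_self]

theorem IsContentChain.sum_row_eq {n : ℕ} {c : List ℕ} {Q : ℕ → ℕ → ℕ}
    (hQ : IsContentChain (n + 1) c Q) (hK : c.length ≤ n)
    (hG : ∀ i ≤ c.length, growthGrid A i L = Q i) {i : ℕ} (hi : i < c.length) :
    ∑ j ∈ range L, A i j = c.getD i 0 := by
  have := sum_growthGrid_succ_left A (N := n) (i := i) (by omega) L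
  rw [hG i hi.le, hG (i + 1) hi, hQ.sum_succ i] at this
  omega

variable {P Q : ℕ → ℕ → ℕ} (hb : IsBoundary K L P Q)
    (hA : ∀ i < K, ∀ j < L, A i j = shrinkMatrix P Q K L i j)
include hb hA

theorem IsBoundary.growthGrid_eq_col {i : ℕ} (hi : i ≤ K) : growthGrid A i L = Q i := by
  rw [hb.growthGrid_eq_shrinkGrid hA hi le_rfl, hb.shrinkGrid_of_le_right hi le_rfl]

theorem IsBoundary.growthGrid_transpose_eq_row {j : ℕ} (hj : j ≤ L) :
    growthGrid (fun i j => A j i) j K = P j := by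
  rw [growthGrid_transpose, hb.growthGrid_eq_shrinkGrid hA le_rfl hj, shrinkGrid_of_le le_rfl]

theorem IsBoundary.rowChain_eq (hQ : ∀ i, K ≤ i → Q i = Q K) : rowChain A K L = Q := by
  funext i
  rw [rowChain, hb.growthGrid_eq_col hA (min_le_right i K)]
  rcases le_total i K with hi | hi
  · rw [min_eq_left hi]
  · rw [min_eq_right hi, hQ i hi]

theorem IsBoundary.rowChain_transpose_eq : rowChain (fun i j => A j i) L K = P := by
  funext j
  rw [rowChain, hb.growthGrid_transpose_eq_row hA (min_le_right j L)]
  rcases le_total j L with hj | hj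
  · rw [min_eq_left hj]
  · rw [min_eq_right hj, hb.row_stable j hj]

end RowChain

theorem IsContentChain.isBoundary {N : ℕ} {μ ν : List ℕ} {P Q : ℕ → ℕ → ℕ}
    (hQ : IsContentChain N μ Q) (hP : IsContentChain N ν P) (h : Q μ.length = P ν.length) :
    IsBoundary μ.length ν.length P Q :=
  ⟨hP.toIsStripChain, hQ.toIsStripChain, hP.stable, h.symm⟩

section Matrix

variable {K L : ℕ}

def extendMatrix (A : Matrix (Fin K) (Fin L) ℕ) (i j : ℕ) : ℕ :=
  if h : i < K ∧ j < L then A ⟨i, h.1⟩ ⟨j, h.2⟩ else 0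

theorem extendMatrix_apply (A : Matrix (Fin K) (Fin L) ℕ) (i : Fin K) (j : Fin L) :
    extendMatrix A i j = A i j :=
  dif_pos ⟨i.2, j.2⟩

theorem extendMatrix_transpose (A : Matrix (Fin K) (Fin L) ℕ) :
    extendMatrix Aᵀ = fun i j => extendMatrix A j i := by
  funext i j
  by_cases h : j < K ∧ i < L
  · rw [extendMatrix, extendMatrix, dif_pos h.symm, dif_pos h]
    rfl
  · rw [extendMatrix, extendMatrix, dif_neg (mt And.symm h), dif_neg h]

theorem sum_rows_eq_get_iff (c : List ℕ) (A : Matrix (Fin c.length) (Fin L) ℕ) :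
    (∀ i, ∑ j, A i j = c.get i) ↔
      ∀ i < c.length, ∑ j ∈ range L, extendMatrix A i j = c.getD i 0 := by
  have hrow (i : Fin c.length) : ∑ j ∈ range L, extendMatrix A i j = ∑ j, A i j := by
    rw [← Fin.sum_univ_eq_sum_range]
    exact sum_congr rfl fun j _ => extendMatrix_apply A i j
  refine ⟨fun h i hi => ?_, fun h i => ?_⟩
  · rw [hrow ⟨i, hi⟩, h, List.getD_eq_getElem _ _ hi, List.get_eq_getElem]
  · rw [← hrow, h i i.2, List.getD_eq_getElem _ _ i.2, List.get_eq_getElem]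

theorem finite_natMatrices (μ ν : List ℕ) :
    Finite {A : Matrix (Fin μ.length) (Fin ν.length) ℕ //
      (∀ i, ∑ j, A i j = μ.get i) ∧ ∀ j, ∑ i, A i j = ν.get j} := by
  refine Finite.of_injective
    (fun A i j => (⟨A.1 i j, Nat.lt_succ_of_le ?_⟩ : Fin (μ.sum + 1))) fun A B h => ?_
  · calc A.1 i j ≤ ∑ j, A.1 i j := single_le_sum (fun _ _ => Nat.zero_le _) (mem_univ j)
      _ = μ.get i := A.2.1 i
      _ ≤ μ.sum := List.le_sum_of_mem (List.get_mem μ i)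
  · exact Subtype.ext <| Matrix.ext fun i j => congrArg Fin.val (congrFun (congrFun h i) j)

end Matrix

def matrixEquivChainPairs {n : ℕ} {μ ν : List ℕ} (hμ : μ.length ≤ n)
    (hν : ν.length ≤ n) :
    {A : Matrix (Fin μ.length) (Fin ν.length) ℕ //
      (∀ i, ∑ j, A i j = μ.get i) ∧ ∀ j, ∑ i, A i j = ν.get j} ≃
    {p : {g // IsContentChain (n + 1) μ g} × {g // IsContentChain (n + 1) ν g} //
      p.1.1 μ.length = p.2.1 ν.length} where
  toFun A :=
    ⟨(⟨rowChain (extendMatrix A.1) μ.length ν.length,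
        isContentChain_rowChain rfl hμ ((sum_rows_eq_get_iff μ A.1).mp A.2.1)⟩,
      ⟨rowChain (extendMatrix A.1ᵀ) ν.length μ.length,
        isContentChain_rowChain rfl hν ((sum_rows_eq_get_iff ν A.1ᵀ).mp A.2.2)⟩),
      by simp only [rowChain, min_self, extendMatrix_transpose, growthGrid_transpose]⟩
  invFun p :=
    have hb := p.1.1.2.isBoundary p.1.2.2 p.2
    let M : Matrix (Fin μ.length) (Fin ν.length) ℕ :=
      Matrix.of fun i j => shrinkMatrix p.1.2.1 p.1.1.1 μ.length ν.length i j
    have hM := fun i (hi : i < μ.length) j (hj : j < ν.length) =>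
      extendMatrix_apply M ⟨i, hi⟩ ⟨j, hj⟩
    ⟨M, (sum_rows_eq_get_iff μ M).mpr fun _ =>
        p.1.1.2.sum_row_eq hμ fun _ => hb.growthGrid_eq_col hM,
      (sum_rows_eq_get_iff ν Mᵀ).mpr fun _ => p.1.2.2.sum_row_eq hν fun _ hj => by
        rw [extendMatrix_transpose]
        exact hb.growthGrid_transpose_eq_row hM hj⟩
  left_inv A := by
    refine Subtype.ext <| Matrix.ext fun i j => ?_
    simp only [Matrix.of_apply, extendMatrix_transpose, rowChain_transpose]
    exact (shrinkMatrix_growthGrid _ i.2 j.2).trans (extendMatrix_apply A.1 i j)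
  right_inv p := by
    have hb := p.1.1.2.isBoundary p.1.2.2 p.2
    have hM := fun i (hi : i < μ.length) j (hj : j < ν.length) =>
      extendMatrix_apply (Matrix.of fun (i : Fin μ.length) (j : Fin ν.length) =>
        shrinkMatrix p.1.2.1 p.1.1.1 μ.length ν.length i j) ⟨i, hi⟩ ⟨j, hj⟩
    refine Subtype.ext <| Prod.ext (Subtype.ext ?_) (Subtype.ext ?_)
    · exact hb.rowChain_eq hM p.1.1.2.stable
    · simp only [extendMatrix_transpose]
      exact hb.rowChain_transpose_eq hM

section EndPart

variable {n : ℕ} (μ : n.Partition)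

theorem IsContentChain.sum_apply {N : ℕ} {c : List ℕ} {g : ℕ → ℕ → ℕ}
    (hg : IsContentChain N c g) (i : ℕ) :
    ∑ t ∈ range N, g i t = ∑ i' ∈ range i, c.getD i' 0 := by
  induction i with
  | zero => simp [hg.zero]
  | succ i ih => rw [hg.sum_succ, ih, sum_range_succ]

def endPart (g : {g // IsContentChain (n + 1) (partsList μ) g}) : n.Partition :=
  ofAntitone (g.1 (partsList μ).length) (g.2.antitone_apply _)
    (g.2.apply_eq_zero (length_partsList_le μ)) <| by
      have := g.2.sum_apply (partsList μ).length
      rw [List.sum_range_getD, sum_partsList, sum_range_succ,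
        g.2.apply_eq_zero (length_partsList_le μ), add_zero] at this
      exact this

theorem partsFun_endPart (g : {g // IsContentChain (n + 1) (partsList μ) g}) :
    partsFun (endPart μ g) = g.1 (partsList μ).length :=
  partsFun_ofAntitone _ _ _ _

theorem endPart_eq_endPart_iff (ν : n.Partition)
    (g : {g // IsContentChain (n + 1) (partsList μ) g})
    (h : {h // IsContentChain (n + 1) (partsList ν) h}) :
    endPart μ g = endPart ν h ↔ g.1 (partsList μ).length = h.1 (partsList ν).length := by
  rw [← partsFun_endPart, ← partsFun_endPart]
  exact partsFun_injective.eq_iff.symm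

theorem card_endPart_fiber (l : n.Partition) :
    Nat.card {g : {g // IsContentChain (n + 1) (partsList μ) g} // endPart μ g = l} =
      kostka (partsList l) (partsList μ) := by
  rw [kostka_eq_card]
  refine Nat.card_congr <| ((Equiv.subtypeEquivRight fun g => ?_).trans
    (Equiv.subtypeSubtypeEquivSubtypeInter _ fun g => g (partsList μ).length = partsFun l)).trans
    (ssytEquivContentChain (antitone_partsFun l) ((length_partsList_le l).trans n.le_succ)).symm
  rw [← partsFun_endPart]
  exact partsFun_injective.eq_iff.symm

end EndPart

end RSK

/-- `IM_{μν} = Σ_λ K_{λ μ} · K_{λ ν}`: the number of nonnegative-integer matrices with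
row sums `μ` and column sums `ν` is a sum of products of Kostka numbers over partitions
`λ` of `n`. -/
theorem countNatMatrices_eq_sum_kostka (n : ℕ) (μ ν : n.Partition) :
    countNatMatrices (partsList μ) (partsList ν)
      = ∑ l : n.Partition,
          kostka (partsList l) (partsList μ) * kostka (partsList l) (partsList ν) := by
  open RSK in
  let e := (matrixEquivChainPairs (length_partsList_le μ) (length_partsList_le ν)).trans
    (Equiv.subtypeEquivRight fun p => (endPart_eq_endPart_iff μ ν p.1 p.2).symm)
  have := finite_natMatrices (partsList μ) (partsList ν)
  have := Finite.of_equiv _ e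
  rw [countNatMatrices, Nat.card_congr e, Nat.card_pullback_eq_sum]
  exact sum_congr rfl fun l _ => by rw [card_endPart_fiber, card_endPart_fiber]
end
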